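/- (Chain rule for directed information, second form) Let (X^n, Y^n, Z^n) be jointly distributed random sequences with finite alphabets. Then I(X^n→(Y^n,Z^n)) = I(X^n→Y^n‖DZ^n) + I(X^n→Z^n‖Y^n), where I(X^n→(Y^n,Z^n)) := Σ_{i=1}^n I(X^i; Y_i, Z_i | Y^{i-1}, Z^{i-1}), I(X^n→Y^n‖DZ^n) := Σ_{i=1}^n I(X^i; Y_i | Y^{i-1}, Z^{i-1}), and I(X^n→Z^n‖Y^n) := Σ_{i=1}^n I(X^i; Z_i | Z^{i-1}, Y^i). -/

import Mathlib

open Finset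

noncomputable section

-- Probability of the event `E` under the pmf `p` on a finite sample space `Ω`.
open Classical in
def pr {Ω : Type*} [Fintype Ω] (p : Ω → ℝ) (E : Ω → Prop) : ℝ :=
  ∑ ω, if E ω then p ω else 0

-- Shannon entropy `H(U)` (pointwise form).
def entropy {Ω α : Type*} [Fintype Ω] (p : Ω → ℝ) (U : Ω → α) : ℝ :=
  -∑ ω, p ω * Real.log (pr p (fun ω' => U ω' = U ω))

-- Conditional Shannon entropy `H(U | V)`.
def condEntropy {Ω α β : Type*} [Fintype Ω] (p : Ω → ℝ) (U : Ω → α) (V : Ω → β) : ℝ :=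
  -∑ ω, p ω * Real.log
      (pr p (fun ω' => U ω' = U ω ∧ V ω' = V ω) / pr p (fun ω' => V ω' = V ω))

-- Mutual information `I(U ; V)`.
def mutualInfo {Ω α β : Type*} [Fintype Ω] (p : Ω → ℝ) (U : Ω → α) (V : Ω → β) : ℝ :=
  ∑ ω, p ω * Real.log
      (pr p (fun ω' => U ω' = U ω ∧ V ω' = V ω) /
        (pr p (fun ω' => U ω' = U ω) * pr p (fun ω' => V ω' = V ω)))

-- Conditional mutual information `I(U ; V | W)`.
def condMutualInfo {Ω α β γ : Type*} [Fintype Ω] (p : Ω → ℝ)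
    (U : Ω → α) (V : Ω → β) (W : Ω → γ) : ℝ :=
  ∑ ω, p ω * Real.log
      ((pr p (fun ω' => U ω' = U ω ∧ V ω' = V ω ∧ W ω' = W ω) *
          pr p (fun ω' => W ω' = W ω)) /
        (pr p (fun ω' => U ω' = U ω ∧ W ω' = W ω) *
          pr p (fun ω' => V ω' = V ω ∧ W ω' = W ω)))

-- The prefix `(X_0, …, X_{i-1})` of a random sequence `X`.
def prefixSeq {Ω 𝒳 : Type*} (X : Ω → ℕ → 𝒳) (i : ℕ) : Ω → (Fin i → 𝒳) :=
  fun ω j => X ω (j : ℕ)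

-- Directed information `I(X^n → Y^n) = ∑_{i=1}^n I(X^i ; Y_i | Y^{i-1})` (0-indexed).
def directedInfo {Ω 𝒳 𝒴 : Type*} [Fintype Ω] (p : Ω → ℝ)
    (X : Ω → ℕ → 𝒳) (Y : Ω → ℕ → 𝒴) (n : ℕ) : ℝ :=
  ∑ i ∈ Finset.range n,
    condMutualInfo p (prefixSeq X (i + 1)) (fun ω => Y ω i) (prefixSeq Y i)


/-!
Term by term this is the chain rule `I(U ; V₁, V₂ | W) = I(U ; V₁ | W) + I(U ; V₂ | V₁, W)`
with `U = X^{i+1}`, `V₁ = Y_i`, `V₂ = Z_i`, `W = (Y^i, Z^i)`, because conditioning on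
`(Y_i, Y^i, Z^i)` is conditioning on `(Z^i, Y^{i+1})`. The chain rule itself holds pointwise
in `ω`: on the support of `p` every probability in the log-ratio is positive, and the ratio
for `I(U ; V₁, V₂ | W)` is the product of the other two.
-/

section

variable {Ω : Type*} [Fintype Ω] (p : Ω → ℝ)

lemma pr_congr {E F : Ω → Prop} (h : ∀ ω, E ω ↔ F ω) : pr p E = pr p F :=
  congrArg (pr p) (funext fun ω => propext (h ω))

lemma pr_pos (hp0 : ∀ ω, 0 ≤ p ω) {E : Ω → Prop} {ω : Ω} (hω : 0 < p ω) (hE : E ω) :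
    0 < pr p E := by
  classical
  calc 0 < p ω := hω
    _ = if E ω then p ω else 0 := (if_pos hE).symm
    _ ≤ pr p E :=
      single_le_sum (f := fun ω' => if E ω' then p ω' else 0)
        (fun ω' _ => by split_ifs <;> simp [hp0 ω']) (mem_univ ω)

variable {α β γ δ : Type*}

lemma condMutualInfo_congr_cond (U : Ω → α) (V : Ω → β) {W : Ω → γ} {W' : Ω → δ}
    (h : ∀ ω ω', W ω' = W ω ↔ W' ω' = W' ω) :
    condMutualInfo p U V W = condMutualInfo p U V W' := by
  unfold condMutualInfo
  refine sum_congr rfl fun ω _ => ?_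
  simp only [h ω]

theorem condMutualInfo_chain (hp0 : ∀ ω, 0 ≤ p ω)
    (U : Ω → α) (V₁ : Ω → β) (V₂ : Ω → γ) (W : Ω → δ) :
    condMutualInfo p U (fun ω => (V₁ ω, V₂ ω)) W =
      condMutualInfo p U V₁ W + condMutualInfo p U V₂ (fun ω => (V₁ ω, W ω)) := by
  unfold condMutualInfo
  rw [← sum_add_distrib]
  refine sum_congr rfl fun ω _ => ?_
  rcases (hp0 ω).eq_or_lt with hω | hω
  · simp [← hω]
  simp only [Prod.mk.injEq]
  set a := pr p fun ω' => U ω' = U ω ∧ (V₁ ω' = V₁ ω ∧ V₂ ω' = V₂ ω) ∧ W ω' = W ω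
  set d := pr p fun ω' => (V₁ ω' = V₁ ω ∧ V₂ ω' = V₂ ω) ∧ W ω' = W ω
  have ha : (pr p fun ω' => U ω' = U ω ∧ V₂ ω' = V₂ ω ∧ V₁ ω' = V₁ ω ∧ W ω' = W ω) = a :=
    pr_congr p fun ω' => by tauto
  have hd : (pr p fun ω' => V₂ ω' = V₂ ω ∧ V₁ ω' = V₁ ω ∧ W ω' = W ω) = d :=
    pr_congr p fun ω' => by tauto
  rw [ha, hd]
  have pos {E : Ω → Prop} (hE : E ω) : 0 < pr p E := pr_pos p hp0 hω hE
  have ha₀ : 0 < a := pos ⟨rfl, ⟨rfl, rfl⟩, rfl⟩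
  have hd₀ : 0 < d := pos ⟨⟨rfl, rfl⟩, rfl⟩
  have hb₀ : 0 < pr p fun ω' => W ω' = W ω := pos rfl
  have hc₀ : 0 < pr p fun ω' => U ω' = U ω ∧ W ω' = W ω := pos ⟨rfl, rfl⟩
  have he₀ : 0 < pr p fun ω' => U ω' = U ω ∧ V₁ ω' = V₁ ω ∧ W ω' = W ω := pos ⟨rfl, rfl, rfl⟩
  have hf₀ : 0 < pr p fun ω' => V₁ ω' = V₁ ω ∧ W ω' = W ω := pos ⟨rfl, rfl⟩
  rw [← mul_add, ← Real.log_mul (by positivity) (by positivity)]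
  congr 2
  field_simp

end

lemma prefixSeq_succ_eq_iff {Ω 𝒳 : Type*} (X : Ω → ℕ → 𝒳) (i : ℕ) (ω ω' : Ω) :
    prefixSeq X (i + 1) ω' = prefixSeq X (i + 1) ω ↔
      X ω' i = X ω i ∧ prefixSeq X i ω' = prefixSeq X i ω := by
  simp only [funext_iff, Fin.forall_fin_succ', prefixSeq, Fin.val_castSucc, Fin.val_last]
  exact and_comm

theorem directedInfo_chain_rule_second_general
    {Ω 𝒳 𝒴 𝒵 : Type*} [Fintype Ω]
    (p : Ω → ℝ) (hp0 : ∀ ω, 0 ≤ p ω)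
    (X : Ω → ℕ → 𝒳) (Y : Ω → ℕ → 𝒴) (Z : Ω → ℕ → 𝒵) (n : ℕ) :
    ∑ i ∈ Finset.range n,
        condMutualInfo p (prefixSeq X (i + 1))
          (fun ω => (Y ω i, Z ω i))
          (fun ω => (prefixSeq Y i ω, prefixSeq Z i ω)) =
      (∑ i ∈ Finset.range n,
          condMutualInfo p (prefixSeq X (i + 1)) (fun ω => Y ω i)
            (fun ω => (prefixSeq Y i ω, prefixSeq Z i ω))) +
        ∑ i ∈ Finset.range n,
          condMutualInfo p (prefixSeq X (i + 1)) (fun ω => Z ω i)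
            (fun ω => (prefixSeq Z i ω, prefixSeq Y (i + 1) ω)) := by
  rw [← sum_add_distrib]
  refine sum_congr rfl fun i _ => ?_
  rw [condMutualInfo_chain p hp0]
  congr 1
  refine condMutualInfo_congr_cond p _ _ fun ω ω' => ?_
  simp only [Prod.mk.injEq, prefixSeq_succ_eq_iff]
  tauto

/-- chain rule for directed information, second form:
`I(X^n→(Y^n,Z^n)) = I(X^n→Y^n‖DZ^n) + I(X^n→Z^n‖Y^n)`. -/
theorem directedInfo_chain_rule_second
    {Ω 𝒳 𝒴 𝒵 : Type*} [Fintype Ω] [Fintype 𝒳] [Fintype 𝒴] [Fintype 𝒵]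
    (p : Ω → ℝ) (hp0 : ∀ ω, 0 ≤ p ω) (hp1 : ∑ ω, p ω = 1)
    (X : Ω → ℕ → 𝒳) (Y : Ω → ℕ → 𝒴) (Z : Ω → ℕ → 𝒵) (n : ℕ) :
    ∑ i ∈ Finset.range n,
        condMutualInfo p (prefixSeq X (i + 1))
          (fun ω => (Y ω i, Z ω i))
          (fun ω => (prefixSeq Y i ω, prefixSeq Z i ω)) =
      (∑ i ∈ Finset.range n,
          condMutualInfo p (prefixSeq X (i + 1)) (fun ω => Y ω i)
            (fun ω => (prefixSeq Y i ω, prefixSeq Z i ω))) +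
        ∑ i ∈ Finset.range n,
          condMutualInfo p (prefixSeq X (i + 1)) (fun ω => Z ω i)
            (fun ω => (prefixSeq Z i ω, prefixSeq Y (i + 1) ω)) :=
  directedInfo_chain_rule_second_general p hp0 X Y Z n
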